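/- arXiv:2012.05721 — 7 statements merged into one kernel-verified Lean document; each statement's English description precedes it below -/
import Mathlib

section
/- Let R be a commutative ring and let x, h ∈ R satisfy x^2 = -4·h·x - 4·h^2. Then for every natural number k ≥ 1 one has x^k = (-1)^(k-1) · ( k·2^(k-1)·h^(k-1)·x + (k-1)·2^k·h^k ). -/
/-! The relation says `(x + 2h)^2 = 0`, so `x = -2h + ε` with `ε` square-zero, and the binomial
expansion of `x^k` stops after its linear term: `x^k = (-2h)^k + k (-2h)^(k-1) (x + 2h)`. -/

open Polynomial in
theorem add_pow_of_sq_eq_zero {R : Type*} [CommSemiring R] (a ε : R) (hε : ε ^ 2 = 0) (n : ℕ) :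
    (a + ε) ^ n = a ^ n + n * a ^ (n - 1) * ε := by
  simpa [derivative_X_pow] using (X ^ n : R[X]).eval_add_of_sq_eq_zero a ε hε

/-- Powers of an element `x` of a commutative ring satisfying the quadratic
relation `x^2 = -4*h*x - 4*h^2`. -/
theorem stmt_0 {R : Type*} [CommRing R] (x h : R)
    (hx : x ^ 2 = -4 * h * x - 4 * h ^ 2) :
    ∀ k : ℕ, 1 ≤ k →
      x ^ k = (-1 : R) ^ (k - 1) *
        ((k : R) * 2 ^ (k - 1) * h ^ (k - 1) * x + ((k - 1 : ℕ) : R) * 2 ^ k * h ^ k) := by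
  intro k hk
  have h_sq_zero : (x + 2 * h) ^ 2 = 0 := by linear_combination hx
  have h_expand := add_pow_of_sq_eq_zero (-(2 * h)) (x + 2 * h) h_sq_zero k
  obtain ⟨n, rfl⟩ := Nat.exists_eq_add_of_le' hk
  rw [show -(2 * h) + (x + 2 * h) = x by ring] at h_expand
  rw [h_expand, neg_pow (2 * h), neg_pow (2 * h)]
  push_cast
  ring
end

section
/- Let λ ∈ ℂ, let x ∈ ℂ with x ≠ 0, let p ≥ 1 and q ≥ 0 be natural numbers, and let 0 < r < |x|. Then (2πi)⁻¹ · ∮_{|y|=r} e^(λy) · y^(-p) · (x+y)^(-q) dy = Σ_{j=0}^{p-1} (-q)^{\underline{j}} · λ^(p-1-j) / (j! · (p-1-j)!) · x^(-(q+j)). -/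
/-!
The integrand is `y ^ (-p) * g y` with `g y = (x + y) ^ (-q) * exp (λ y)` holomorphic on the closed
disc of radius `r < ‖x‖`, so by Cauchy's formula the residue is the Taylor coefficient
`g⁽ᵖ⁻¹⁾(0) / (p - 1)!`. Leibniz's rule, together with
`(d/dy)ʲ (x + y) ^ m = m^{\underline j} (x + y) ^ (m - j)` and `(d/dy)ᵏ exp (λ y) = λᵏ exp (λ y)`,
turns this coefficient into the stated sum.
-/

open Complex Finset

theorem iteratedDeriv_const_add_zpow {𝕜 : Type*} [NontriviallyNormedField 𝕜]
    (x : 𝕜) (m : ℤ) (k : ℕ) (y : 𝕜) :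
    iteratedDeriv k (fun y => (x + y) ^ m) y
      = (descPochhammer 𝕜 k).eval (m : 𝕜) * (x + y) ^ (m - k) := by
  rw [iteratedDeriv_comp_const_add k (fun y => y ^ m), iteratedDeriv_eq_iterate,
    descPochhammer_eval_eq_prod_range]
  exact iter_deriv_zpow m (x + y) k

theorem iteratedDeriv_const_add_zpow_mul_cexp (x lam : ℂ) (m : ℤ) (n : ℕ) {y : ℂ}
    (hy : x + y ≠ 0) :
    iteratedDeriv n (fun y => (x + y) ^ m * exp (lam * y)) y
      = ∑ j ∈ range (n + 1), n.choose j * (descPochhammer ℂ j).eval (m : ℂ)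
          * lam ^ (n - j) * ((x + y) ^ (m - j) * exp (lam * y)) := by
  have hzpow : ContDiffAt ℂ n (fun y => (x + y) ^ m) y :=
    (AnalyticAt.fun_zpow (by fun_prop) hy).contDiffAt
  rw [iteratedDeriv_fun_mul hzpow (by fun_prop)]
  refine sum_congr rfl fun j _ => ?_
  rw [iteratedDeriv_const_add_zpow, iteratedDeriv_cexp_const_mul]
  ring

theorem circleIntegral_sub_zpow_neg_mul_eq_iteratedDeriv {f : ℂ → ℂ} {c : ℂ} {r : ℝ} (hr : 0 < r)
    (hf : DifferentiableOn ℂ f (Metric.closedBall c r)) {p : ℕ} (hp : 1 ≤ p) :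
    (2 * Real.pi * I)⁻¹ * ∮ z in C(c, r), (z - c) ^ (-(p : ℤ)) * f z
      = iteratedDeriv (p - 1) f c / (p - 1).factorial := by
  obtain ⟨n, rfl⟩ := Nat.exists_eq_add_of_le' hp
  have := hf.circleIntegral_one_div_sub_center_pow_smul hr n
  simp only [smul_eq_mul, Nat.add_sub_cancel] at this ⊢
  have hintegral : (∮ z in C(c, r), (z - c) ^ (-((n + 1 : ℕ) : ℤ)) * f z)
      = ∮ z in C(c, r), 1 / (z - c) ^ (n + 1) * f z := by
    simp only [zpow_neg, zpow_natCast, one_div]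
  rw [hintegral, this]
  field_simp [Real.pi_ne_zero, I_ne_zero]

theorem stmt_6_general (lam x : ℂ) (p q : ℕ) (hp : 1 ≤ p)
    (r : ℝ) (hr0 : 0 < r) (hrx : r < ‖x‖) :
    (2 * Real.pi * Complex.I)⁻¹ *
        (∮ y in C(0, r), Complex.exp (lam * y) * y ^ (-(p : ℤ)) * (x + y) ^ (-(q : ℤ)))
      = ∑ j ∈ Finset.range p,
          (descPochhammer ℂ j).eval (-(q : ℂ)) * lam ^ (p - 1 - j)
            / ((j.factorial : ℂ) * ((p - 1 - j).factorial : ℂ))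
            * x ^ (-((q : ℤ) + (j : ℤ))) := by
  have hne : ∀ y ∈ Metric.closedBall (0 : ℂ) r, x + y ≠ 0 := fun y hy h => by
    rw [mem_closedBall_zero_iff, eq_neg_of_add_eq_zero_right h, norm_neg] at hy
    exact hy.not_gt hrx
  have hg : DifferentiableOn ℂ (fun y => (x + y) ^ (-(q : ℤ)) * exp (lam * y))
      (Metric.closedBall 0 r) := fun y hy =>
    (((differentiableAt_const x).add differentiableAt_id).zpow (Or.inl (hne y hy))).mul
      (by fun_prop) |>.differentiableWithinAt
  have hintegrand : (fun y => exp (lam * y) * y ^ (-(p : ℤ)) * (x + y) ^ (-(q : ℤ)))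
      = fun y => (y - 0) ^ (-(p : ℤ)) * ((x + y) ^ (-(q : ℤ)) * exp (lam * y)) := by
    ext y; rw [sub_zero]; ring
  rw [hintegrand, circleIntegral_sub_zpow_neg_mul_eq_iteratedDeriv hr0 hg hp,
    iteratedDeriv_const_add_zpow_mul_cexp x lam _ _ (hne 0 (by simpa using hr0.le)),
    Nat.sub_add_cancel hp, sum_div]
  refine sum_congr rfl fun j hj => ?_
  have hjn : j ≤ p - 1 := Nat.le_sub_one_of_lt (mem_range.mp hj)
  rw [Nat.cast_choose ℂ hjn, add_zero, mul_zero, exp_zero, mul_one, sub_eq_add_neg, ← neg_add,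
    Int.cast_neg, Int.cast_natCast]
  have hfac : ((p - 1).factorial : ℂ) ≠ 0 := mod_cast (p - 1).factorial_ne_zero
  field_simp

/-- The residue at `y = 0` of `e^(λy) / (y^p (x+y)^q)`. -/
theorem stmt_6 (lam x : ℂ) (hx : x ≠ 0) (p q : ℕ) (hp : 1 ≤ p)
    (r : ℝ) (hr0 : 0 < r) (hrx : r < ‖x‖) :
    (2 * Real.pi * Complex.I)⁻¹ *
        (∮ y in C(0, r), Complex.exp (lam * y) * y ^ (-(p : ℤ)) * (x + y) ^ (-(q : ℤ)))
      = ∑ j ∈ Finset.range p,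
          (descPochhammer ℂ j).eval (-(q : ℂ)) * lam ^ (p - 1 - j)
            / ((j.factorial : ℂ) * ((p - 1 - j).factorial : ℂ))
            * x ^ (-((q : ℤ) + (j : ℤ))) :=
  stmt_6_general lam x p q hp r hr0 hrx
end

section
/- Let λ ∈ ℂ, let x ∈ ℂ with x ≠ 0, let p ≥ 0 and q ≥ 1 be natural numbers, and let 0 < r < |x|. Then (2πi)⁻¹ · ∮_{|y+x|=r} e^(λy) · y^(-p) · (x+y)^(-q) dy = e^(-λx) · Σ_{j=0}^{q-1} (-1)^(p+j) · (-p)^{\underline{j}} · λ^(q-1-j) / (j! · (q-1-j)!) · x^(-(p+j)). -/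
open Complex Finset

/-! The disc `|y + x| ≤ r` avoids `0`, so `g(y) = y⁻ᵖ e^(λy)` is holomorphic on it and the
integrand is `g(y) / (y + x)^q`. Cauchy's formula for derivatives turns the integral into
`g^(q-1)(-x) / (q-1)!`, which the Leibniz rule evaluates: the `j`-th derivative of `y⁻ᵖ` is
`(-p)^{\underline{j}} y^(-p-j)` and that of `e^(λy)` is `λʲ e^(λy)`. -/

theorem iteratedDeriv_zpow_eq_descPochhammer {𝕜 : Type*} [NontriviallyNormedField 𝕜]
    (m : ℤ) (k : ℕ) (x : 𝕜) :
    iteratedDeriv k (fun y => y ^ m) x = (descPochhammer 𝕜 k).eval (m : 𝕜) * x ^ (m - k) := by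
  rw [iteratedDeriv_eq_iterate, iter_deriv_zpow, descPochhammer_eval_eq_prod_range]

theorem iteratedDeriv_zpow_mul_cexp_const_mul (m : ℤ) (lam : ℂ) (n : ℕ) {z : ℂ}
    (hz : z ≠ 0) :
    iteratedDeriv n (fun w => w ^ m * exp (lam * w)) z =
      ∑ j ∈ range (n + 1), n.choose j * (descPochhammer ℂ j).eval (m : ℂ) * z ^ (m - j) *
        (lam ^ (n - j) * exp (lam * z)) := by
  rw [iteratedDeriv_fun_mul (f := fun w => w ^ m) (g := fun w => exp (lam * w))
    (analyticAt_id.zpow hz).contDiffAt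
    (contDiff_exp.comp (contDiff_const.mul contDiff_id)).contDiffAt]
  simp only [iteratedDeriv_zpow_eq_descPochhammer, iteratedDeriv_cexp_const_mul, mul_assoc]

theorem DifferentiableOn.two_pi_I_inv_mul_circleIntegral_div_sub_center_pow {f : ℂ → ℂ}
    {c : ℂ} {r : ℝ} (hf : DifferentiableOn ℂ f (Metric.closedBall c r)) (hr : 0 < r) (n : ℕ) :
    (2 * Real.pi * I)⁻¹ * ∮ z in C(c, r), f z / (z - c) ^ (n + 1)
      = iteratedDeriv n f c / n.factorial := by
  have h := hf.circleIntegral_one_div_sub_center_pow_smul hr n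
  simp only [smul_eq_mul, one_div_mul_eq_div] at h
  rw [h]
  field_simp [two_pi_I_ne_zero]

theorem neg_zpow_neg_natCast {K : Type*} [Field K] (a : K) (k : ℕ) :
    (-a) ^ (-(k : ℤ)) = (-1) ^ k * a ^ (-(k : ℤ)) := by
  rw [zpow_neg, zpow_neg, zpow_natCast, zpow_natCast, neg_pow, mul_inv, ← inv_pow, inv_neg_one]

/-- The residue at `y = -x` of `e^(λy) / (y^p (x+y)^q)`. -/
theorem stmt_7 (lam x : ℂ) (hx : x ≠ 0) (p q : ℕ) (hq : 1 ≤ q)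
    (r : ℝ) (hr0 : 0 < r) (hrx : r < ‖x‖) :
    (2 * Real.pi * Complex.I)⁻¹ *
        (∮ y in C(-x, r), Complex.exp (lam * y) * y ^ (-(p : ℤ)) * (x + y) ^ (-(q : ℤ)))
      = Complex.exp (-(lam * x)) * ∑ j ∈ Finset.range q,
          (-1 : ℂ) ^ (p + j) * (descPochhammer ℂ j).eval (-(p : ℂ)) * lam ^ (q - 1 - j)
            / ((j.factorial : ℂ) * ((q - 1 - j).factorial : ℂ))
            * x ^ (-((p : ℤ) + (j : ℤ))) := by
  obtain ⟨n, rfl⟩ : ∃ n, q = n + 1 := ⟨q - 1, by omega⟩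
  set g : ℂ → ℂ := fun w => w ^ (-(p : ℤ)) * exp (lam * w)
  have hg : DifferentiableOn ℂ g (Metric.closedBall (-x) r) := by
    intro z hz
    have hz0 : z ≠ 0 := by
      rintro rfl
      rw [Metric.mem_closedBall, dist_zero_left, norm_neg] at hz
      linarith
    exact ((differentiableAt_zpow.2 (Or.inl hz0)).mul
      (differentiableAt_id.const_mul lam).cexp).differentiableWithinAt
  have hintegrand : (fun y => exp (lam * y) * y ^ (-(p : ℤ)) * (x + y) ^ (-((n + 1 : ℕ) : ℤ)))
      = fun y => g y / (y - -x) ^ (n + 1) := by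
    funext y
    simp only [g, sub_neg_eq_add, add_comm y, zpow_neg (x + y), zpow_natCast]
    ring
  rw [hintegrand, hg.two_pi_I_inv_mul_circleIntegral_div_sub_center_pow hr0,
    iteratedDeriv_zpow_mul_cexp_const_mul _ _ _ (neg_ne_zero.2 hx), sum_div, mul_sum]
  refine sum_congr rfl fun j hj => ?_
  have hjn : j ≤ n := Nat.lt_succ_iff.mp (mem_range.mp hj)
  rw [Nat.cast_choose ℂ hjn, show -(p : ℤ) - j = -((p + j : ℕ) : ℤ) by push_cast; ring,
    neg_zpow_neg_natCast, Nat.add_sub_cancel, mul_neg]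
  push_cast
  field_simp [Nat.factorial_ne_zero]
end

section
/- Let λ ∈ ℂ, let x ∈ ℂ with x ≠ 0, let p ≥ 1 and q ≥ 1 be natural numbers, and let r > |x|. Then (2πi)⁻¹ · ∮_{|y|=r} e^(λy) · y^(-p) · (x+y)^(-q) dy = Σ_{j=0}^{p-1} (-q)^{\underline{j}} · λ^(p-1-j) / (j! · (p-1-j)!) · x^(-(q+j)) + e^(-λx) · Σ_{j=0}^{q-1} (-1)^(p+j) · (-p)^{\underline{j}} · λ^(q-1-j) / (j! · (q-1-j)!) · x^(-(p+j)). -/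
/-!
Partial fractions, `1 / (y (x + y)) = x⁻¹ (1 / y - 1 / (x + y))`, express the integral for
`(p + 1, q + 1)` through those for `(p + 1, q)` and `(p, q + 1)`, so a double induction leaves
only the axes `p = 0` and `q = 0`. There the integrand `e^(λz) (z - c)^(-(k+1))` has a single pole,
and `∮ e^(λz) (z - c)^(-(k+1)) dz = 2πi λ^k e^(λc) / k!` follows by induction on `k` from
`∮ (e^(λz) (z - c)^n)' dz = 0`; Mathlib's Cauchy formula for derivatives only covers the centre of
the circle, while `c` ranges over both poles. The residue sums obey the same recurrence by Pascal's
rule for falling factorials. Translating `y = u - x` shows that the residue at `-x` is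
`e^(-λx)` times the residue at `0` of `e^(λu) u^(-q) (-x + u)^(-p)`.
-/

open Complex Finset
open Metric

open Polynomial in
theorem descPochhammer_eval_sub_one_succ {R : Type*} [CommRing R] (n : ℕ) (z : R) :
    (descPochhammer R (n + 1)).eval (z - 1)
      = (descPochhammer R (n + 1)).eval z - (n + 1) * (descPochhammer R n).eval (z - 1) := by
  simpa [eval_comp] using congrArg (eval z) (descPochhammer_succ_comp_X_sub_one (R := R) n)

theorem zpow_neg_natCast_add {K : Type*} [DivisionRing K] (x : K) (a b : ℕ) :
    x ^ (-((a : ℤ) + b)) = (x ^ (a + b))⁻¹ := by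
  rw [← Nat.cast_add, zpow_neg, zpow_natCast]

section Residue

variable (lam x : ℂ)

noncomputable def residueTerm (n q j : ℕ) : ℂ :=
  (descPochhammer ℂ j).eval (-(q : ℂ)) * lam ^ (n - j)
    / ((j.factorial : ℂ) * ((n - j).factorial : ℂ)) * x ^ (-((q : ℤ) + (j : ℤ)))

/-- The residue at `y = 0` of `e^(λy) y^(-p) (x + y)^(-q)`: the coefficient of `y^(p-1)` in
`(∑ λ^i y^i / i!) * (∑ (-q)^{\underline j} / j! * x^(-q-j) y^j)`. -/
noncomputable def residueAtZero (p q : ℕ) : ℂ :=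
  ∑ j ∈ range p, residueTerm lam x (p - 1) q j

theorem residueTerm_zero (n q : ℕ) :
    residueTerm lam x n (q + 1) 0 = x⁻¹ * residueTerm lam x n q 0 := by
  simp only [residueTerm, zpow_neg_natCast_add, descPochhammer_zero, Polynomial.eval_one,
    add_right_comm q 1 0, pow_succ, mul_inv]
  ring

theorem residueTerm_succ_succ (n q j : ℕ) :
    residueTerm lam x n (q + 1) (j + 1)
      = x⁻¹ * (residueTerm lam x n q (j + 1) - residueTerm lam x (n - 1) (q + 1) j) := by
  have hpascal := descPochhammer_eval_sub_one_succ j (-(q : ℂ))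
  rw [neg_sub_left, add_comm] at hpascal
  simp only [residueTerm, zpow_neg_natCast_add]
  simp only [Nat.cast_add, Nat.cast_one, hpascal, Nat.sub_sub, add_comm 1 j, Nat.factorial_succ,
    Nat.cast_mul, show q + 1 + (j + 1) = q + (j + 1) + 1 by ring, show q + 1 + j = q + (j + 1) by ring,
    pow_succ, mul_inv]
  field_simp

@[simp]
theorem residueAtZero_zero_left (q : ℕ) : residueAtZero lam x 0 q = 0 := by
  simp [residueAtZero]

theorem residueAtZero_succ_zero (p : ℕ) :
    residueAtZero lam x (p + 1) 0 = lam ^ p / p.factorial := by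
  rw [residueAtZero, sum_eq_single 0]
  · simp [residueTerm]
  · intro j _ hj
    simp [residueTerm, hj]
  · simp

theorem residueAtZero_succ_succ (p q : ℕ) :
    residueAtZero lam x (p + 1) (q + 1)
      = x⁻¹ * (residueAtZero lam x (p + 1) q - residueAtZero lam x p (q + 1)) := by
  simp only [residueAtZero, Nat.add_sub_cancel, sum_range_succ', residueTerm_succ_succ,
    residueTerm_zero, ← mul_sum, sum_sub_distrib]
  ring

theorem residueAtZero_neg (p q : ℕ) :
    residueAtZero lam (-x) q p = ∑ j ∈ range q,
      (-1 : ℂ) ^ (p + j) * (descPochhammer ℂ j).eval (-(p : ℂ)) * lam ^ (q - 1 - j)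
        / ((j.factorial : ℂ) * ((q - 1 - j).factorial : ℂ)) * x ^ (-((p : ℤ) + (j : ℤ))) := by
  refine sum_congr rfl fun j _ => ?_
  rw [residueTerm, zpow_neg_natCast_add, zpow_neg_natCast_add, neg_pow, mul_inv, ← inv_pow,
    inv_neg, inv_one]
  ring

end Residue

section CauchyExp

variable {lam c w : ℂ} {R : ℝ}

theorem circleIntegrable_exp_mul_sub_zpow (hR : 0 ≤ R) (hc : c ∉ sphere w R) (n : ℤ) :
    CircleIntegrable (fun z => exp (lam * z) * (z - c) ^ n) w R :=
  ContinuousOn.circleIntegrable hR <| ContinuousOn.mul (by fun_prop) <|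
    (continuousOn_id.sub continuousOn_const).zpow₀ n fun _ hz =>
      Or.inl (sub_ne_zero.2 (ne_of_mem_of_not_mem hz hc))

theorem circleIntegral_exp_mul_sub_zpow_sub_one (hR : 0 ≤ R) (hc : c ∉ sphere w R) (n : ℤ) :
    n * ∮ z in C(w, R), exp (lam * z) * (z - c) ^ (n - 1)
      = -(lam * ∮ z in C(w, R), exp (lam * z) * (z - c) ^ n) := by
  have hderiv : ∀ z ∈ sphere w R, HasDerivWithinAt (fun z => exp (lam * z) * (z - c) ^ n)
      (lam * (exp (lam * z) * (z - c) ^ n) + n * (exp (lam * z) * (z - c) ^ (n - 1)))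
      (sphere w R) z := by
    intro z hz
    have hzc : z - c ≠ 0 := sub_ne_zero.2 (ne_of_mem_of_not_mem hz hc)
    have hexp : HasDerivAt (fun z => exp (lam * z)) (exp (lam * z) * lam) z := by
      simpa using ((hasDerivAt_id z).const_mul lam).cexp
    have hpow : HasDerivAt (fun z => (z - c) ^ n) (n * (z - c) ^ (n - 1)) z :=
      (hasDerivAt_zpow n (z - c) (Or.inl hzc)).comp_sub_const z c
    exact (hexp.mul hpow).hasDerivWithinAt.congr_deriv (by ring)
  have hint := circleIntegrable_exp_mul_sub_zpow (lam := lam) hR hc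
  have := circleIntegral.integral_eq_zero_of_hasDerivWithinAt hR hderiv
  have h1 : CircleIntegrable (fun z => lam * (exp (lam * z) * (z - c) ^ n)) w R :=
    (hint n).const_fun_smul
  have h2 : CircleIntegrable (fun z => (n : ℂ) * (exp (lam * z) * (z - c) ^ (n - 1))) w R :=
    (hint (n - 1)).const_fun_smul
  rw [circleIntegral.integral_add h1 h2, circleIntegral.integral_const_mul,
    circleIntegral.integral_const_mul] at this
  linear_combination this

theorem circleIntegral_exp_mul_sub_zpow_neg_succ (hc : c ∈ ball w R) (k : ℕ) :
    ∮ z in C(w, R), exp (lam * z) * (z - c) ^ (-((k + 1 : ℕ) : ℤ))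
      = 2 * Real.pi * I * (lam ^ k * exp (lam * c) / k.factorial) := by
  have hR : 0 ≤ R := (dist_nonneg.trans_lt hc).le
  have hc' : c ∉ sphere w R := fun h => sphere_disjoint_ball.ne_of_mem h hc rfl
  induction k with
  | zero =>
    have := DifferentiableOn.circleIntegral_sub_inv_smul (f := fun z => exp (lam * z))
      (by fun_prop) hc
    simpa [mul_comm] using this
  | succ k ih =>
    have h := circleIntegral_exp_mul_sub_zpow_sub_one (lam := lam) hR hc' (-((k + 1 : ℕ) : ℤ))
    rw [ih, show -((k + 1 : ℕ) : ℤ) - 1 = -((k + 1 + 1 : ℕ) : ℤ) by push_cast; ring] at h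
    have hk : ((k : ℂ) + 1) ≠ 0 := Nat.cast_add_one_ne_zero k
    rw [Nat.factorial_succ, Nat.cast_mul]
    push_cast at h ⊢
    field_simp
    linear_combination -h

end CauchyExp

section TwoPoles

variable (lam x : ℂ)

noncomputable def twoPoleIntegrand (p q : ℕ) (y : ℂ) : ℂ :=
  exp (lam * y) * y ^ (-(p : ℤ)) * (x + y) ^ (-(q : ℤ))

theorem twoPoleIntegrand_zero_left (q : ℕ) :
    twoPoleIntegrand lam x 0 q = fun y => exp (lam * y) * (y - -x) ^ (-(q : ℤ)) := by
  ext y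
  simp [twoPoleIntegrand, add_comm x]

theorem twoPoleIntegrand_zero_right (p : ℕ) :
    twoPoleIntegrand lam x p 0 = fun y => exp (lam * y) * (y - 0) ^ (-(p : ℤ)) := by
  ext y
  simp [twoPoleIntegrand]

variable {lam x}

theorem twoPoleIntegrand_succ_succ (hx : x ≠ 0) {y : ℂ} (hy : y ≠ 0) (hxy : x + y ≠ 0)
    (p q : ℕ) :
    twoPoleIntegrand lam x (p + 1) (q + 1) y
      = x⁻¹ * (twoPoleIntegrand lam x (p + 1) q y - twoPoleIntegrand lam x p (q + 1) y) := by
  simp only [twoPoleIntegrand, zpow_neg, zpow_natCast, pow_succ]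
  field_simp
  ring

variable {w : ℂ} {R : ℝ}

theorem circleIntegrable_twoPoleIntegrand (hR : 0 ≤ R) (h0 : 0 ∉ sphere w R)
    (hx : -x ∉ sphere w R) (p q : ℕ) :
    CircleIntegrable (twoPoleIntegrand lam x p q) w R := by
  unfold twoPoleIntegrand
  exact ContinuousOn.circleIntegrable hR <| ContinuousOn.mul
    ((by fun_prop : ContinuousOn (fun y => exp (lam * y)) _).mul
      (continuousOn_id.zpow₀ _ fun y hy => Or.inl (ne_of_mem_of_not_mem hy h0)))
    ((continuousOn_const.add continuousOn_id).zpow₀ _ fun y hy =>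
      Or.inl fun hxy => hx (eq_neg_of_add_eq_zero_right hxy ▸ hy))

theorem circleIntegral_twoPoleIntegrand_succ_succ (hx : x ≠ 0) (hR : 0 ≤ R)
    (h0 : 0 ∉ sphere w R) (hx' : -x ∉ sphere w R) (p q : ℕ) :
    ∮ y in C(w, R), twoPoleIntegrand lam x (p + 1) (q + 1) y
      = x⁻¹ * ((∮ y in C(w, R), twoPoleIntegrand lam x (p + 1) q y)
          - ∮ y in C(w, R), twoPoleIntegrand lam x p (q + 1) y) := by
  have hsplit : ∀ y ∈ sphere w R, twoPoleIntegrand lam x (p + 1) (q + 1) y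
      = x⁻¹ * (twoPoleIntegrand lam x (p + 1) q y - twoPoleIntegrand lam x p (q + 1) y) := by
    intro y hy
    exact twoPoleIntegrand_succ_succ hx (ne_of_mem_of_not_mem hy h0)
      (fun hxy => hx' (eq_neg_of_add_eq_zero_right hxy ▸ hy)) p q
  have hint := circleIntegrable_twoPoleIntegrand (lam := lam) hR h0 hx'
  rw [circleIntegral.integral_congr hR hsplit, circleIntegral.integral_const_mul,
    circleIntegral.integral_sub (hint _ _) (hint _ _)]

theorem circleIntegral_twoPoleIntegrand (hx : x ≠ 0) (h0 : 0 ∈ ball w R) (hx' : -x ∈ ball w R)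
    (p q : ℕ) :
    ∮ y in C(w, R), twoPoleIntegrand lam x p q y
      = 2 * Real.pi * I
          * (residueAtZero lam x p q + exp (-(lam * x)) * residueAtZero lam (-x) q p) := by
  have hR : 0 ≤ R := (dist_nonneg.trans_lt h0).le
  have hsphere {c : ℂ} (hc : c ∈ ball w R) : c ∉ sphere w R :=
    fun h => sphere_disjoint_ball.ne_of_mem h hc rfl
  induction p generalizing q with
  | zero =>
    cases q with
    | zero =>
      have hdiff : DiffContOnCl ℂ (fun y => exp (lam * y)) (ball w R) :=
        (by fun_prop : Differentiable ℂ fun y => exp (lam * y)).diffContOnCl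
      simpa [twoPoleIntegrand] using hdiff.circleIntegral_eq_zero hR
    | succ q =>
      rw [twoPoleIntegrand_zero_left, circleIntegral_exp_mul_sub_zpow_neg_succ hx',
        residueAtZero_zero_left, residueAtZero_succ_zero, mul_neg]
      ring
  | succ p ihp =>
    induction q with
    | zero =>
      rw [twoPoleIntegrand_zero_right, circleIntegral_exp_mul_sub_zpow_neg_succ h0,
        residueAtZero_succ_zero, residueAtZero_zero_left, mul_zero, exp_zero]
      ring
    | succ q ihq =>
      rw [circleIntegral_twoPoleIntegrand_succ_succ hx hR (hsphere h0) (hsphere hx'), ihq,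
        ihp, residueAtZero_succ_succ, residueAtZero_succ_succ, inv_neg]
      ring

end TwoPoles

theorem stmt_8_general (lam x : ℂ) (hx : x ≠ 0) (p q : ℕ)
    (r : ℝ) (hrx : ‖x‖ < r) :
    (2 * Real.pi * Complex.I)⁻¹ *
        (∮ y in C(0, r), Complex.exp (lam * y) * y ^ (-(p : ℤ)) * (x + y) ^ (-(q : ℤ)))
      = (∑ j ∈ Finset.range p,
          (descPochhammer ℂ j).eval (-(q : ℂ)) * lam ^ (p - 1 - j)
            / ((j.factorial : ℂ) * ((p - 1 - j).factorial : ℂ))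
            * x ^ (-((q : ℤ) + (j : ℤ))))
        + Complex.exp (-(lam * x)) * ∑ j ∈ Finset.range q,
            (-1 : ℂ) ^ (p + j) * (descPochhammer ℂ j).eval (-(p : ℂ)) * lam ^ (q - 1 - j)
              / ((j.factorial : ℂ) * ((q - 1 - j).factorial : ℂ))
              * x ^ (-((p : ℤ) + (j : ℤ))) := by
  have h0 : (0 : ℂ) ∈ ball 0 r := mem_ball_self ((norm_nonneg x).trans_lt hrx)
  have hx' : -x ∈ ball 0 r := by simpa using hrx
  rw [← residueAtZero_neg]
  exact (inv_mul_eq_iff_eq_mul₀ two_pi_I_ne_zero).2 (circleIntegral_twoPoleIntegrand hx h0 hx' p q)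

/-- The total residue of `e^(λy) / (y^p (x+y)^q)`: a circle of radius `r > |x|`
centered at `0` encloses both poles `y = 0` and `y = -x`. -/
theorem stmt_8 (lam x : ℂ) (hx : x ≠ 0) (p q : ℕ) (hp : 1 ≤ p) (hq : 1 ≤ q)
    (r : ℝ) (hrx : ‖x‖ < r) :
    (2 * Real.pi * Complex.I)⁻¹ *
        (∮ y in C(0, r), Complex.exp (lam * y) * y ^ (-(p : ℤ)) * (x + y) ^ (-(q : ℤ)))
      = (∑ j ∈ Finset.range p,
          (descPochhammer ℂ j).eval (-(q : ℂ)) * lam ^ (p - 1 - j)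
            / ((j.factorial : ℂ) * ((p - 1 - j).factorial : ℂ))
            * x ^ (-((q : ℤ) + (j : ℤ))))
        + Complex.exp (-(lam * x)) * ∑ j ∈ Finset.range q,
            (-1 : ℂ) ^ (p + j) * (descPochhammer ℂ j).eval (-(p : ℂ)) * lam ^ (q - 1 - j)
              / ((j.factorial : ℂ) * ((q - 1 - j).factorial : ℂ))
              * x ^ (-((p : ℤ) + (j : ℤ))) :=
  stmt_8_general lam x hx p q r hrx
end

section
/- Let b ≥ 1, c ≥ 0 and δ ≥ 0 be natural numbers and let u, v be real numbers. Then Σ_{j=0}^{b-1} [ (-c)^{\underline{j}} / (j! · (b-1-j)! · (δ+j)!) ] · (u+v)^(δ+j) · v^(b-1-j) = (1/(δ+b-1)!) · Σ_{i=0}^{δ+b-1} C(δ+b-1, i) · binom(δ+b-1-c-i, b-1) · u^i · v^(δ+b-1-i). -/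
open Finset

/-- The generalized binomial coefficient `binom(z, j) = z^{\underline{j}} / j!`
with real (possibly negative integer) upper index. -/
noncomputable def genBinom (z : ℝ) (j : ℕ) : ℝ :=
  (descPochhammer ℝ j).eval z / (j.factorial : ℝ)

/-!
Write `b = b' + 1` and `n = δ + b'`. Expanding `(u + v)^(δ + j) v^(b' - j)` binomially, the
coefficient of `u^i v^(n - i)` on the left is
`∑ j, binom(-c, j) C(δ + j, i) / ((b' - j)! (δ + j)!)`. Since
`C(δ + j, i) / ((b' - j)! (δ + j)!) = C(n, i) / n! · C(n - i, b' - j)`, this coefficient is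
`C(n, i) / n!` times `∑ j, binom(-c, j) C(n - i, b' - j)`, which is `binom(n - i - c, b')` by the
Chu–Vandermonde identity.
-/

open Polynomial

theorem genBinom_eq_choose (z : ℝ) (j : ℕ) : genBinom z j = Ring.choose z j := by
  have h := Ring.descPochhammer_eq_factorial_smul_choose z j
  rw [← aeval_eq_smeval, aeval_def, algebraMap_int_eq, ← eval_map, descPochhammer_map,
    nsmul_eq_mul] at h
  rw [genBinom, h, mul_div_cancel_left₀ _ (by positivity)]

theorem genBinom_add_natCast (x : ℝ) (n k : ℕ) :
    genBinom (x + n) k = ∑ j ∈ range (k + 1), genBinom x j * (n.choose (k - j) : ℝ) := by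
  simp only [genBinom_eq_choose, Ring.add_choose_eq k (Commute.all x n), Ring.choose_natCast,
    Nat.sum_antidiagonal_eq_sum_range_succ_mk]

theorem add_pow_mul_pow_eq_sum {R : Type*} [CommSemiring R] (x y : R) {m k n : ℕ}
    (hn : m + k = n) :
    (x + y) ^ m * y ^ k = ∑ i ∈ range (n + 1), x ^ i * y ^ (n - i) * (m.choose i : R) := by
  rw [add_pow, sum_mul]
  calc _ = ∑ i ∈ range (m + 1), x ^ i * y ^ (n - i) * (m.choose i : R) :=
        sum_congr rfl fun i hi => by
          rw [mul_right_comm, mul_assoc (x ^ i), ← pow_add,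
            show m - i + k = n - i by simp at hi; omega]
    _ = _ := sum_subset (range_subset_range.2 (by omega)) fun i _ him => by
        rw [Nat.choose_eq_zero_of_lt (by simp at him; omega), Nat.cast_zero, mul_zero]

theorem choose_div_factorial_mul_factorial {p q n i : ℕ} (hpq : p + q = n) (hi : i ≤ n) :
    (p.choose i : ℝ) / (q.factorial * p.factorial)
      = n.choose i / n.factorial * (n - i).choose q := by
  subst hpq
  rcases le_or_gt i p with hip | hpi
  · rw [Nat.cast_choose ℝ hip, Nat.cast_choose ℝ hi, Nat.cast_choose ℝ (by omega : q ≤ p + q - i),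
      show p + q - i - q = p - i by omega]
    field_simp
  · rw [Nat.choose_eq_zero_of_lt hpi, Nat.choose_eq_zero_of_lt (by omega : p + q - i < q)]
    simp

theorem sum_genBinom_mul_choose (x : ℝ) {δ b i : ℕ} (hi : i ≤ δ + b) :
    ∑ j ∈ range (b + 1), genBinom x j / ((b - j).factorial * (δ + j).factorial) * (δ + j).choose i
      = (δ + b).choose i / (δ + b).factorial * genBinom (x + (δ + b - i : ℕ)) b := by
  rw [genBinom_add_natCast, mul_sum]
  refine sum_congr rfl fun j hj => ?_
  rw [div_mul_eq_mul_div, mul_div_assoc,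
    choose_div_factorial_mul_factorial (by simp at hj; omega) hi]
  ring

/-- Closed form of the term `R₁₁` in the volume formula for line arrangements. -/
theorem stmt_9 (b c δ : ℕ) (hb : 1 ≤ b) (u v : ℝ) :
    ∑ j ∈ Finset.range b,
        (descPochhammer ℝ j).eval (-(c : ℝ))
          / ((j.factorial : ℝ) * ((b - 1 - j).factorial : ℝ) * ((δ + j).factorial : ℝ))
          * (u + v) ^ (δ + j) * v ^ (b - 1 - j)
      = (1 / ((δ + b - 1).factorial : ℝ)) *
          ∑ i ∈ Finset.range (δ + b),
            ((δ + b - 1).choose i : ℝ)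
              * genBinom ((δ : ℝ) + (b : ℝ) - 1 - (c : ℝ) - (i : ℝ)) (b - 1)
              * u ^ i * v ^ (δ + b - 1 - i) := by
  obtain ⟨b, rfl⟩ : ∃ b', b = b' + 1 := ⟨b - 1, by omega⟩
  have hn : δ + (b + 1) = δ + b + 1 := rfl
  simp only [hn, Nat.add_sub_cancel, Nat.cast_add, Nat.cast_one]
  calc _ = ∑ j ∈ range (b + 1), ∑ i ∈ range (δ + b + 1),
          genBinom (-c) j / ((b - j).factorial * (δ + j).factorial)
            * (δ + j).choose i * (u ^ i * v ^ (δ + b - i)) := by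
        refine sum_congr rfl fun j hj => ?_
        rw [mul_assoc, add_pow_mul_pow_eq_sum u v (n := δ + b) (by simp at hj; omega), mul_sum]
        refine sum_congr rfl fun i _ => ?_
        rw [genBinom, mul_assoc (j.factorial : ℝ), ← div_div]
        ring
    _ = ∑ i ∈ range (δ + b + 1), (δ + b).choose i / (δ + b).factorial
          * genBinom (-c + (δ + b - i : ℕ)) b * (u ^ i * v ^ (δ + b - i)) := by
        rw [sum_comm]
        refine sum_congr rfl fun i hi => ?_
        rw [← sum_mul, sum_genBinom_mul_choose _ (by simp at hi; omega)]
    _ = _ := by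
        rw [mul_sum]
        refine sum_congr rfl fun i hi => ?_
        rw [Nat.cast_sub (by simp at hi; omega)]
        push_cast
        ring_nf
end

section
/- Let a, b, c be natural numbers with b ≥ 1, a+b ≥ 1 and a+c ≥ 1, and let u, v be real numbers. Then Σ_{j=0}^{b-1} (-c)^{\underline{j}} · (u+v)^(a+c-1+j) · v^(b-1-j) / (j! · (b-1-j)! · (a+c-1+j)!) + Σ_{j=0}^{c-1} (-1)^(b+j) · (-b)^{\underline{j}} · v^(c-1-j) · u^(a+b-1+j) / (j! · (c-1-j)! · (a+b-1+j)!) = (1/(a+b+c-2)!) · Σ_{i=0}^{a+b-2} C(a+b+c-2, i) · C(a+b-2-i, b-1) · u^i · v^(a+b+c-2-i). -/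
/-!
Dividing by `j!`, the falling factorials become generalized binomial coefficients:
`(-c)^{\underline j} / j! = Ring.choose (-c) j` in the binomial ring `ℝ`. Expanding
`(u + v)^(a+c-1+j)` and applying Chu–Vandermonde, the first sum is
`∑_{k ≤ N} W_k u^k v^(N-k) / (k! (N-k)!)` with `N = a+b+c-2` and
`W_k = Ring.choose (N-k-c) (b-1)`. By the reflection
`(-1)^t choose (-(p+1)) t = (-1)^p choose (-(t+1)) p`, the second sum is exactly
`-∑_{k ≥ a+b-1} W_k u^k v^(N-k) / (k! (N-k)!)`, so these coefficients cancel; for `k < a+b-1`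
the argument `N-k-c = a+b-2-k` is a natural number and `W_k` is the binomial coefficient on
the right.
-/

open Finset
open scoped Nat

theorem descPochhammer_eval_eq_factorial_mul_choose {R : Type*} [CommRing R] [BinomialRing R]
    (r : R) (n : ℕ) : (descPochhammer R n).eval r = n ! * Ring.choose r n := by
  rw [← nsmul_eq_mul, ← Ring.descPochhammer_eq_factorial_smul_choose,
    ← descPochhammer_map (Int.castRingHom R), Polynomial.eval_map,
    ← Polynomial.eval₂_smulOneHom_eq_smeval]
  congr 1
  exact Subsingleton.elim _ _

theorem Ring.choose_add_natCast {R : Type*} [CommRing R] [BinomialRing R] (r : R) (m k : ℕ) :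
    Ring.choose (r + m) k = ∑ j ∈ range (k + 1), Ring.choose r j * (m.choose (k - j) : R) := by
  rw [Ring.add_choose_eq k (Commute.all _ _), Nat.sum_antidiagonal_eq_sum_range_succ
    (fun i j => Ring.choose r i * Ring.choose (m : R) j)]
  simp only [Ring.choose_natCast]

theorem Ring.choose_neg_natCast_succ {R : Type*} [CommRing R] [BinomialRing R] (p t : ℕ) :
    Ring.choose (-(p + 1 : R)) t = (-1) ^ t * (p + t).choose t := by
  rw [Ring.choose_neg, Units.smul_def, zsmul_eq_mul, Int.cast_negOnePow_natCast,
    show (p : R) + 1 + t - 1 = ((p + t : ℕ) : R) by push_cast; ring, Ring.choose_natCast]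

theorem Ring.neg_one_pow_mul_choose_neg_succ {R : Type*} [CommRing R] [BinomialRing R] (p t : ℕ) :
    (-1) ^ t * Ring.choose (-(p + 1 : R)) t = (-1) ^ p * Ring.choose (-(t + 1 : R)) p := by
  rw [Ring.choose_neg_natCast_succ, Ring.choose_neg_natCast_succ, add_comm t p,
    Nat.choose_symm_add, ← mul_assoc, ← mul_assoc, ← mul_pow, ← mul_pow]
  norm_num

noncomputable def binomTerm (u v : ℝ) (N k : ℕ) : ℝ := u ^ k * v ^ (N - k) / (k ! * (N - k)!)

theorem choose_mul_pow_mul_pow_div_factorial (u v : ℝ) {N k : ℕ} (hk : k ≤ N) :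
    N.choose k * u ^ k * v ^ (N - k) / N ! = binomTerm u v N k := by
  rw [binomTerm, Nat.cast_choose ℝ hk]
  field_simp

theorem add_pow_div_factorial (u v : ℝ) (n : ℕ) :
    (u + v) ^ n / n ! = ∑ k ∈ range (n + 1), binomTerm u v n k := by
  rw [add_pow, sum_div]
  refine sum_congr rfl fun k hk => ?_
  rw [← choose_mul_pow_mul_pow_div_factorial u v (Nat.lt_succ_iff.mp (mem_range.mp hk))]
  ring

theorem binomTerm_mul_pow_div_factorial (u v : ℝ) {m k : ℕ} (hk : k ≤ m) (q : ℕ) :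
    binomTerm u v m k * (v ^ q / q !) = (m + q - k).choose q * binomTerm u v (m + q) k := by
  have hmq : m + q - k - q = m - k := by omega
  rw [binomTerm, binomTerm, Nat.cast_choose ℝ (by omega : q ≤ m + q - k), hmq,
    show m + q - k = m - k + q by omega, pow_add]
  field_simp

theorem add_pow_mul_pow_div_factorial (u v : ℝ) (m q : ℕ) :
    (u + v) ^ m * v ^ q / (m ! * q !) =
      ∑ k ∈ range (m + q + 1), (m + q - k).choose q * binomTerm u v (m + q) k := by
  have hsplit : (u + v) ^ m * v ^ q / (m ! * q !) = (u + v) ^ m / m ! * (v ^ q / q !) := by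
    field_simp
  rw [hsplit, add_pow_div_factorial, sum_mul]
  refine sum_subset_zero_on_sdiff (range_subset_range.mpr (by omega)) ?_ ?_
  · intro k hk
    simp only [mem_sdiff, mem_range] at hk
    rw [Nat.choose_eq_zero_of_lt (by omega), Nat.cast_zero, zero_mul]
  · intro k hk
    exact binomTerm_mul_pow_div_factorial u v (Nat.lt_succ_iff.mp (mem_range.mp hk)) q

theorem sum_descPochhammer_mul_add_pow (x u v : ℝ) (n p : ℕ) :
    ∑ j ∈ range (p + 1), (descPochhammer ℝ j).eval x * (u + v) ^ (n + j) * v ^ (p - j)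
        / (j ! * (p - j)! * (n + j)!) =
      ∑ k ∈ range (n + p + 1),
        Ring.choose (x + (n + p - k : ℕ)) p * binomTerm u v (n + p) k := by
  have hterm : ∀ j ∈ range (p + 1),
      (descPochhammer ℝ j).eval x * (u + v) ^ (n + j) * v ^ (p - j)
          / (j ! * (p - j)! * (n + j)!) =
        ∑ k ∈ range (n + p + 1),
          Ring.choose x j * ((n + p - k).choose (p - j) * binomTerm u v (n + p) k) := by
    intro j hj
    have hnp : n + j + (p - j) = n + p := by have := mem_range.mp hj; omega
    rw [← mul_sum, ← hnp, ← add_pow_mul_pow_div_factorial,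
      descPochhammer_eval_eq_factorial_mul_choose]
    field_simp
  rw [sum_congr rfl hterm, sum_comm]
  refine sum_congr rfl fun k _ => ?_
  simp only [← mul_assoc, ← sum_mul, Ring.choose_add_natCast]

theorem sum_neg_one_pow_mul_descPochhammer (u v : ℝ) (p c m : ℕ) :
    ∑ t ∈ range c, (-1) ^ (p + 1 + t) * (descPochhammer ℝ t).eval (-(p + 1 : ℝ))
        * v ^ (c - 1 - t) * u ^ (m + t) / (t ! * (c - 1 - t)! * (m + t)!) =
      -∑ k ∈ Ico m (m + c), Ring.choose (-c + (m + c - 1 - k : ℕ) : ℝ) p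
        * binomTerm u v (m + c - 1) k := by
  rw [sum_Ico_eq_sum_range, Nat.add_sub_cancel_left, ← sum_neg_distrib]
  refine sum_congr rfl fun t ht => ?_
  have ht : t < c := mem_range.mp ht
  have harg : (-c + (m + c - 1 - (m + t) : ℕ) : ℝ) = -(t + 1) := by
    rw [show m + c - 1 - (m + t) = c - 1 - t by omega, Nat.cast_sub (by omega),
      Nat.cast_sub (by omega)]
    push_cast
    ring
  have hsign :
      (-1) ^ (p + 1 + t) * Ring.choose (-(p + 1 : ℝ)) t = -Ring.choose (-(t + 1 : ℝ)) p := by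
    rw [pow_add, mul_assoc, Ring.neg_one_pow_mul_choose_neg_succ, ← mul_assoc, ← pow_add]
    simp
  rw [harg, ← neg_mul, ← hsign, binomTerm, descPochhammer_eval_eq_factorial_mul_choose,
    show m + c - 1 - (m + t) = c - 1 - t by omega]
  field_simp

theorem stmt_10_general (a b c : ℕ) (hb : 1 ≤ b) (hac : 1 ≤ a + c) (u v : ℝ) :
    (∑ j ∈ Finset.range b,
        (descPochhammer ℝ j).eval (-(c : ℝ)) * (u + v) ^ (a + c - 1 + j) * v ^ (b - 1 - j)
          / ((j.factorial : ℝ) * ((b - 1 - j).factorial : ℝ) * ((a + c - 1 + j).factorial : ℝ)))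
      + (∑ j ∈ Finset.range c,
          (-1 : ℝ) ^ (b + j) * (descPochhammer ℝ j).eval (-(b : ℝ))
            * v ^ (c - 1 - j) * u ^ (a + b - 1 + j)
            / ((j.factorial : ℝ) * ((c - 1 - j).factorial : ℝ) * ((a + b - 1 + j).factorial : ℝ)))
      = (1 / ((a + b + c - 2).factorial : ℝ)) *
          ∑ i ∈ Finset.range (a + b - 1),
            ((a + b + c - 2).choose i : ℝ) * ((a + b - 2 - i).choose (b - 1) : ℝ)
              * u ^ i * v ^ (a + b + c - 2 - i) := by
  obtain ⟨p, rfl⟩ : ∃ p, b = p + 1 := ⟨b - 1, by omega⟩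
  set N := a + (p + 1) + c - 2
  have hfirst := sum_descPochhammer_mul_add_pow (-c) u v (a + c - 1) p
  have hsecond := sum_neg_one_pow_mul_descPochhammer u v p c (a + p)
  rw [show a + c - 1 + p = N by omega] at hfirst
  rw [show a + p + c = N + 1 by omega, show N + 1 - 1 = N by omega] at hsecond
  rw [show a + (p + 1) - 1 = a + p by omega, show a + (p + 1) - 2 = a + p - 1 by omega,
    Nat.add_sub_cancel, Nat.cast_add_one, hfirst, hsecond,
    ← sum_range_add_sum_Ico _ (show a + p ≤ N + 1 by omega), add_neg_cancel_right, mul_sum]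
  refine sum_congr rfl fun k hk => ?_
  have hk : k < a + p := mem_range.mp hk
  have harg : (-c + (N - k : ℕ) : ℝ) = (a + p - 1 - k : ℕ) := by
    rw [show N - k = a + p - 1 - k + c by omega]
    push_cast
    ring
  rw [harg, Ring.choose_natCast, ← choose_mul_pow_mul_pow_div_factorial u v (by omega : k ≤ N)]
  ring

/-- Equation (R1): closed form of the residue contribution `R₁ = R₁₁ + R₁₂` in the
volume formula for the K-moduli space of weighted line arrangements in `ℙ²`. -/
theorem stmt_10 (a b c : ℕ) (hb : 1 ≤ b) (hab : 1 ≤ a + b) (hac : 1 ≤ a + c) (u v : ℝ) :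
    (∑ j ∈ Finset.range b,
        (descPochhammer ℝ j).eval (-(c : ℝ)) * (u + v) ^ (a + c - 1 + j) * v ^ (b - 1 - j)
          / ((j.factorial : ℝ) * ((b - 1 - j).factorial : ℝ) * ((a + c - 1 + j).factorial : ℝ)))
      + (∑ j ∈ Finset.range c,
          (-1 : ℝ) ^ (b + j) * (descPochhammer ℝ j).eval (-(b : ℝ))
            * v ^ (c - 1 - j) * u ^ (a + b - 1 + j)
            / ((j.factorial : ℝ) * ((c - 1 - j).factorial : ℝ) * ((a + b - 1 + j).factorial : ℝ)))
      = (1 / ((a + b + c - 2).factorial : ℝ)) *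
          ∑ i ∈ Finset.range (a + b - 1),
            ((a + b + c - 2).choose i : ℝ) * ((a + b - 2 - i).choose (b - 1) : ℝ)
              * u ^ i * v ^ (a + b + c - 2 - i) :=
  stmt_10_general a b c hb hac u v
end

section
/- Let a, b, c be natural numbers with a ≥ 1, b ≥ 1 and a+c ≥ 1, and let u, v be real numbers. Then Σ_{j=0}^{b-1} (-c)^{\underline{j}} · u^(a+c-1+j) · (u+v)^(b-1-j) / (j! · (b-1-j)! · (a+c-1+j)!) = (1/(a+b+c-2)!) · Σ_{i=0}^{b-1} C(a+b+c-2, i) · C(a+b-2-i, a-1) · u^(a+b+c-2-i) · v^i. -/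
/-!
Writing `a = A + 1`, `b = B + 1` and `N = A + B + c`, the Pochhammer symbol is `j! · choose (-c) j`
and the factorials in the `j`-th summand combine to `choose N (B - j) / N!`. Expanding
`(u + v)^(B - j)` and using
`choose N (B - j) · choose (B - j) i = choose N i · choose (N - i) (B - j - i)`, the coefficient
of `u^(N - i) v^i` becomes `choose N i` times a Chu–Vandermonde sum
`∑ⱼ choose (-c) j · choose (A + B - i + c) (B - i - j) = choose (A + B - i) (B - i)`.
-/

open Finset Polynomial

namespace Ring

variable {R : Type*} [CommRing R] [BinomialRing R]

theorem descPochhammer_eval_eq_factorial_mul_choose (r : R) (n : ℕ) :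
    (descPochhammer R n).eval r = n.factorial * choose r n := by
  rw [← nsmul_eq_mul, ← descPochhammer_eq_factorial_smul_choose, ← aeval_eq_smeval,
    aeval_def, ← eval_map, algebraMap_int_eq, descPochhammer_map]

theorem sum_range_choose_mul_choose (r s : R) (n : ℕ) :
    ∑ j ∈ range (n + 1), choose r j * choose s (n - j) = choose (r + s) n := by
  rw [add_choose_eq n (Commute.all r s),
    Nat.sum_antidiagonal_eq_sum_range_succ (fun i j => choose r i * choose s j)]

theorem sum_range_choose_neg_mul_choose (c m n : ℕ) :
    ∑ j ∈ range (n + 1), choose (-(c : R)) j * ((m + c).choose (n - j) : R) = m.choose n := by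
  have h := sum_range_choose_mul_choose (-(c : R)) ((m + c : ℕ) : R) n
  rw [show -(c : R) + ((m + c : ℕ) : R) = m by push_cast; ring, choose_natCast] at h
  simpa only [choose_natCast] using h

theorem sum_range_choose_neg_mul_pow_mul_add_pow (A B c : ℕ) (u v : R) :
    ∑ j ∈ range (B + 1),
        choose (-(c : R)) j * ((A + B + c).choose (B - j) : R) * u ^ (A + c + j) *
          (u + v) ^ (B - j)
      = ∑ i ∈ range (B + 1),
          ((A + B + c).choose i : R) * ((A + B - i).choose A : R) * u ^ (A + B + c - i) *
            v ^ i := by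
  have expand : ∀ j ∈ range (B + 1),
      choose (-(c : R)) j * ((A + B + c).choose (B - j) : R) * u ^ (A + c + j) * (u + v) ^ (B - j)
        = ∑ i ∈ range (B - j + 1), choose (-(c : R)) j * ((A + B + c).choose (B - j) : R) *
            u ^ (A + c + j) * (v ^ i * u ^ (B - j - i) * ((B - j).choose i : R)) := by
    intro j _
    rw [add_comm u v, add_pow, mul_sum]
  rw [sum_congr rfl expand, sum_comm' (t' := range (B + 1)) (s' := fun i => range (B - i + 1))
    (by intro j i; simp only [mem_range]; omega)]
  refine sum_congr rfl fun i hi => ?_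
  have hiB : i ≤ B := Nat.lt_succ_iff.mp (mem_range.mp hi)
  calc _ = ∑ j ∈ range (B - i + 1), ((A + B + c).choose i : R) * u ^ (A + B + c - i) * v ^ i *
          (choose (-(c : R)) j * ((A + B - i + c).choose (B - i - j) : R)) := by
        refine sum_congr rfl fun j hj => ?_
        have hj : j ≤ B - i := Nat.lt_succ_iff.mp (mem_range.mp hj)
        have hchoose : ((A + B + c).choose (B - j) : R) * ((B - j).choose i : R)
            = ((A + B + c).choose i : R) * ((A + B - i + c).choose (B - i - j) : R) := by
          rw [← Nat.cast_mul, ← Nat.cast_mul, Nat.choose_mul (by omega),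
            show A + B + c - i = A + B - i + c by omega, show B - j - i = B - i - j by omega]
        have hpow : u ^ (A + c + j) * u ^ (B - j - i) = u ^ (A + B + c - i) := by
          rw [← pow_add]; congr 1; omega
        linear_combination (choose (-(c : R)) j * u ^ (A + c + j) * u ^ (B - j - i) * v ^ i) *
            hchoose + (choose (-(c : R)) j * ((A + B + c).choose i : R) *
              ((A + B - i + c).choose (B - i - j) : R) * v ^ i) * hpow
    _ = ((A + B + c).choose i : R) * u ^ (A + B + c - i) * v ^ i *
          ((A + B - i).choose (B - i) : R) := by
        rw [← mul_sum, sum_range_choose_neg_mul_choose]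
    _ = _ := by
        rw [Nat.choose_symm_of_eq_add (show A + B - i = B - i + A by omega)]
        ring

end Ring

theorem descPochhammer_eval_mul_div_factorials {K : Type*} [Field K] [CharZero K]
    (x y : K) (M : ℕ) {j B : ℕ} (hj : j ≤ B) :
    (descPochhammer K j).eval x * y
        / ((j.factorial : K) * ((B - j).factorial : K) * ((M + j).factorial : K))
      = Ring.choose x j * ((M + B).choose (B - j) : K) * y / ((M + B).factorial : K) := by
  have hfact : ((M + B).choose (B - j) : K) * ((B - j).factorial : K) * ((M + j).factorial : K)
      = ((M + B).factorial : K) := by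
    have h := Nat.choose_mul_factorial_mul_factorial (show B - j ≤ M + B by omega)
    rw [show M + B - (B - j) = M + j by omega] at h
    exact_mod_cast h
  rw [Ring.descPochhammer_eval_eq_factorial_mul_choose,
    div_eq_div_iff (by simp [Nat.factorial_ne_zero]) (by simp [Nat.factorial_ne_zero]), ← hfact]
  ring

theorem stmt_11_general (a b c : ℕ) (ha : 1 ≤ a) (hb : 1 ≤ b) (u v : ℝ) :
    ∑ j ∈ Finset.range b,
        (descPochhammer ℝ j).eval (-(c : ℝ)) * u ^ (a + c - 1 + j) * (u + v) ^ (b - 1 - j)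
          / ((j.factorial : ℝ) * ((b - 1 - j).factorial : ℝ) * ((a + c - 1 + j).factorial : ℝ))
      = (1 / ((a + b + c - 2).factorial : ℝ)) *
          ∑ i ∈ Finset.range b,
            ((a + b + c - 2).choose i : ℝ) * ((a + b - 2 - i).choose (a - 1) : ℝ)
              * u ^ (a + b + c - 2 - i) * v ^ i := by
  obtain ⟨A, rfl⟩ : ∃ A, a = A + 1 := ⟨a - 1, by omega⟩
  obtain ⟨B, rfl⟩ : ∃ B, b = B + 1 := ⟨b - 1, by omega⟩
  simp only [show A + 1 + c - 1 = A + c by omega, Nat.add_sub_cancel,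
    show A + 1 + (B + 1) + c - 2 = A + B + c by omega, show A + 1 + (B + 1) - 2 = A + B by omega]
  rw [← Ring.sum_range_choose_neg_mul_pow_mul_add_pow, mul_sum]
  refine sum_congr rfl fun j hj => ?_
  rw [mul_assoc, descPochhammer_eval_mul_div_factorials _ _ _
      (Nat.lt_succ_iff.mp (mem_range.mp hj)), show A + c + B = A + B + c by ring]
  ring

/-- Equation (R2): closed form of the residue contribution `R₂` in the volume
formula for the K-moduli space of weighted line arrangements in `ℙ²`. -/
theorem stmt_11 (a b c : ℕ) (ha : 1 ≤ a) (hb : 1 ≤ b) (hac : 1 ≤ a + c) (u v : ℝ) :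
    ∑ j ∈ Finset.range b,
        (descPochhammer ℝ j).eval (-(c : ℝ)) * u ^ (a + c - 1 + j) * (u + v) ^ (b - 1 - j)
          / ((j.factorial : ℝ) * ((b - 1 - j).factorial : ℝ) * ((a + c - 1 + j).factorial : ℝ))
      = (1 / ((a + b + c - 2).factorial : ℝ)) *
          ∑ i ∈ Finset.range b,
            ((a + b + c - 2).choose i : ℝ) * ((a + b - 2 - i).choose (a - 1) : ℝ)
              * u ^ (a + b + c - 2 - i) * v ^ i :=
  stmt_11_general a b c ha hb u v
end
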